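/- arXiv:2410.17403 — 5 statements merged into one kernel-verified Lean document; each statement's English description precedes it below -/
import Mathlib

section
/- Let G = (V, E) be a finite digraph with nonnegative edge costs c, let D = {(s_i, t_i)}_{i∈[k]} be k terminal pairs, and let E* ⊆ E be a feasible solution that contains a directed path P with the following property: for every i ∈ [k] there exists a directed s_i–t_i path P_i ⊆ E* with V(P) ∩ V(P_i) ≠ ∅. Then E* contains a junction tree whose density is at most (10·log₂|P| + 12)·c(E*)/k, where |P| denotes the number of edges of P. (Consequently, since P may be assumed to have at most 2k edges after suppressing degree-two vertices, E* contains a junction tree of density O(log k)·c(E*)/k.) -/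
/-!
Index the vertices of `P` as `p 0, …, p (n - 1)` and project every vertex `v` onto it:
`entry v` is the first index reachable from `v`, `exit v` is one past the last index from which
`v` is reachable; both are monotone along edges. Pair `i` owns the nonempty interval
`[entry sᵢ, exit tᵢ)`; with `ℓ = ⌊log₂⌋` of its length, the first multiple `g` of `2 ^ ℓ` after
`entry sᵢ` lies in it, and the interval lies in `(g - 2 ^ ℓ, g + 2 ^ (ℓ + 1))`. All pairs with the
same `(ℓ, g)` are served by one junction tree rooted at `p g`: the edges whose projections meet the
window `(g - 2 ^ ℓ, g]` from below, or `(g, g + 2 ^ (ℓ + 1))` from above. By monotonicity the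
grid points `g` of level `ℓ` whose tree contains a given edge lie in two windows of lengths `2 ^ ℓ`
and `2 ^ (ℓ + 1)`, so there are at most three of them, and the trees of all the pairs cost at most
`3 (⌊log₂ n⌋ + 1) c(E*)` together. Averaging over the `k` pairs gives one tree whose density is at
most `3 (⌊log₂ n⌋ + 1) c(E*) / k ≤ (10 log₂ (n - 1) + 12) c(E*) / k`.
-/

open Finset Relation

namespace Relation.ReflTransGen

variable {α : Type*} {r s : α → α → Prop} {x y : α}

theorem mono_of_between (h : ReflTransGen r x y)
    (hs : ∀ a b, ReflTransGen r x a → r a b → ReflTransGen r b y → s a b) :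
    ReflTransGen s x y := by
  induction h with
  | refl => exact .refl
  | tail hxb hbc ih =>
    exact (ih fun a b hxa hab hbb' => hs a b hxa hab (hbb'.tail hbc)).tail (hs _ _ hxb hbc .refl)

end Relation.ReflTransGen

namespace List.IsChain

variable {α : Type*} {r : α → α → Prop} {l : List α} {a v : α}

theorem reflTransGen_of_head?_eq (hl : l.IsChain r) (ha : l.head? = some a) (hv : v ∈ l) :
    ReflTransGen r a v :=
  hl.induction (ReflTransGen r a) l (fun _ _ hxy hax => hax.tail hxy)
    (fun hne => (List.head_eq_iff_head?_eq_some hne).mpr ha ▸ .refl) v hv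

theorem reflTransGen_of_getLast?_eq (hl : l.IsChain r) (ha : l.getLast? = some a) (hv : v ∈ l) :
    ReflTransGen r v a :=
  hl.backwards_induction (ReflTransGen r · a) l (fun _ _ hxy hya => hya.head hxy)
    (fun hne => (List.getLast_eq_iff_getLast?_eq_some hne).mpr ha ▸ .refl) v hv

theorem reflTransGen_getElem (hl : l.IsChain r) {i j : ℕ} (hij : i ≤ j) (hj : j < l.length) :
    ReflTransGen r l[i] l[j] := by
  rcases hij.eq_or_lt with rfl | hlt
  · exact .refl
  · have hpw : l.Pairwise (ReflTransGen r) :=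
      List.isChain_iff_pairwise.mp (hl.imp fun _ _ => .single)
    exact List.pairwise_iff_getElem.mp hpw i j _ hj hlt

end List.IsChain

theorem Nat.card_filter_dvd_Ico_le (d a m : ℕ) : #{x ∈ Ico a (a + m * d) | d ∣ x} ≤ m := by
  induction m generalizing a with
  | zero => simp
  | succ m ih =>
    have hsplit : Ico a (a + (m + 1) * d) = Ico a (a + d) ∪ Ico (a + d) (a + d + m * d) := by
      rw [Ico_union_Ico_eq_Ico (by omega) (by nlinarith)]
      congr 1
      ring
    have hbase : #{x ∈ Ico a (a + d) | d ∣ x} ≤ 1 := by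
      refine card_le_one.mpr fun x hx y hy => ?_
      simp only [mem_filter, mem_Ico] at hx hy
      have hxy := Nat.eq_zero_of_dvd_of_lt (Nat.dvd_sub hx.2 hy.2) (by omega)
      have hyx := Nat.eq_zero_of_dvd_of_lt (Nat.dvd_sub hy.2 hx.2) (by omega)
      omega
    rw [hsplit, filter_union]
    exact (card_union_le _ _).trans (by linarith [ih (a + d)])

theorem Finset.sum_sum_le_mul_sum {ι α : Type*} [DecidableEq α] {T : Finset ι} {E : Finset α}
    {H : ι → Finset α} (hH : ∀ q ∈ T, H q ⊆ E) {c : α → ℝ} (hc : ∀ e ∈ E, 0 ≤ c e)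
    {m : ℕ} (hm : ∀ e ∈ E, #{q ∈ T | e ∈ H q} ≤ m) :
    ∑ q ∈ T, ∑ e ∈ H q, c e ≤ m * ∑ e ∈ E, c e := by
  calc ∑ q ∈ T, ∑ e ∈ H q, c e = ∑ q ∈ T, ∑ e ∈ E, if e ∈ H q then c e else 0 :=
        sum_congr rfl fun q hq => by rw [sum_ite_mem, inter_eq_right.mpr (hH q hq)]
    _ = ∑ e ∈ E, (#{q ∈ T | e ∈ H q} : ℝ) * c e := by
        rw [sum_comm]
        refine sum_congr rfl fun e _ => ?_
        rw [← sum_filter, sum_const, nsmul_eq_mul]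
    _ ≤ ∑ e ∈ E, (m : ℝ) * c e :=
        sum_le_sum fun e he => mul_le_mul_of_nonneg_right (by exact_mod_cast hm e he) (hc e he)
    _ = m * ∑ e ∈ E, c e := (mul_sum _ _ _).symm

theorem Finset.exists_fiber_div_card_le {ι κ : Type*} [Fintype ι] [Nonempty ι] [DecidableEq κ]
    (φ : ι → κ) (w : κ → ℝ) {B : ℝ} (hw : ∑ q ∈ univ.image φ, w q ≤ B) :
    ∃ q ∈ univ.image φ, w q / #{i | φ i = q} ≤ B / Fintype.card ι := by
  have hfibers : ∑ q ∈ univ.image φ, (#{i | φ i = q} : ℝ) = Fintype.card ι := by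
    exact_mod_cast (card_eq_sum_card_image φ univ).symm
  have hι : (0 : ℝ) < Fintype.card ι := by exact_mod_cast Fintype.card_pos
  obtain ⟨q, hq, hle⟩ := exists_le_of_sum_le (univ_nonempty.image φ)
    (f := fun q => Fintype.card ι * w q) (g := fun q => B * #{i | φ i = q})
    (by
      rw [← mul_sum, ← mul_sum, hfibers, mul_comm]
      exact mul_le_mul_of_nonneg_right hw hι.le)
  obtain ⟨i, -, rfl⟩ := mem_image.mp hq
  have hfiber : (0 : ℝ) < #{j | φ j = φ i} := by
    exact_mod_cast card_pos.mpr ⟨i, by simp⟩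
  refine ⟨φ i, hq, ?_⟩
  rw [div_le_div_iff₀ hfiber hι]
  linarith

theorem Real.three_mul_natLog_add_one_le (n : ℕ) :
    3 * ((Nat.log 2 n : ℝ) + 1) ≤ 10 * Real.logb 2 ((n : ℝ) - 1) + 12 := by
  rcases Nat.lt_or_ge n 2 with hn | hn
  · interval_cases n <;> norm_num
  have hn' : (2 : ℝ) ≤ n := by exact_mod_cast hn
  -- since `n ≤ 2 (n - 1)`
  have hlog : Real.logb 2 n ≤ 1 + Real.logb 2 ((n : ℝ) - 1) := by
    have hsplit : Real.logb 2 (2 * ((n : ℝ) - 1)) = 1 + Real.logb 2 ((n : ℝ) - 1) := by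
      rw [Real.logb_mul two_ne_zero (by linarith), Real.logb_self_eq_one one_lt_two]
    exact hsplit ▸ Real.logb_le_logb_of_le one_lt_two (by linarith) (by linarith)
  have hpos : 0 ≤ Real.logb 2 ((n : ℝ) - 1) := Real.logb_nonneg one_lt_two (by linarith)
  have := Real.natLog_le_logb n 2
  push_cast at this
  linarith

namespace JunctionTree

def dyadicLevel (a b : ℕ) : ℕ := Nat.log 2 (b - a)

/- The first multiple of `2 ^ dyadicLevel a b` that is at least `a`. -/
def dyadicCenter (a b : ℕ) : ℕ :=
  (a + 2 ^ dyadicLevel a b - 1) / 2 ^ dyadicLevel a b * 2 ^ dyadicLevel a b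

theorem dyadicCenter_mem_Ico (a b : ℕ) :
    dyadicCenter a b ∈ Ico a (a + 2 ^ dyadicLevel a b) := by
  have hd : 0 < 2 ^ dyadicLevel a b := Nat.two_pow_pos _
  have hle := Nat.div_mul_le_self (a + 2 ^ dyadicLevel a b - 1) (2 ^ dyadicLevel a b)
  have hlt := Nat.lt_div_mul_add (a := a + 2 ^ dyadicLevel a b - 1) hd
  rw [mem_Ico, dyadicCenter]
  omega

theorem dvd_dyadicCenter (a b : ℕ) : 2 ^ dyadicLevel a b ∣ dyadicCenter a b :=
  Nat.dvd_mul_left _ _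

theorem dyadicLevel_le (a b : ℕ) : dyadicLevel a b ≤ Nat.log 2 b :=
  Nat.log_mono_right (Nat.sub_le b a)

theorem dyadicCenter_lt_right {a b : ℕ} (h : a < b) : dyadicCenter a b < b := by
  have hpow : 2 ^ dyadicLevel a b ≤ b - a := Nat.pow_log_le_self 2 (by omega)
  have := (mem_Ico.mp (dyadicCenter_mem_Ico a b)).2
  omega

theorem lt_dyadicCenter_add {a b : ℕ} (h : a < b) :
    b < dyadicCenter a b + 2 ^ (dyadicLevel a b + 1) := by
  have hpow : b - a < 2 ^ (dyadicLevel a b + 1) := Nat.lt_pow_succ_log_self one_lt_two _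
  have := (mem_Ico.mp (dyadicCenter_mem_Ico a b)).1
  omega

variable {V : Type*}

abbrev Adj (E : Finset (V × V)) (a b : V) : Prop := (a, b) ∈ E

def IsJunctionTree {ι : Type*} (H : Finset (V × V)) (r : V) (D : Finset ι) (s t : ι → V) :
    Prop :=
  ∀ i ∈ D, ReflTransGen (Adj H) (s i) r ∧ ReflTransGen (Adj H) r (t i)

section Path

open Classical

variable (r : V → V → Prop) (p : ℕ → V) (n : ℕ)

/- `entry v = n` if no `p j` with `j < n` is reachable from `v`, and `exit v = 0` if no such
`p j` reaches `v`. -/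
noncomputable def entry (v : V) : ℕ :=
  Nat.find (⟨n, .inl le_rfl⟩ : ∃ j, n ≤ j ∨ ReflTransGen r v (p j))

noncomputable def exit (v : V) : ℕ :=
  Nat.findGreatest (fun j => 0 < j ∧ ReflTransGen r (p (j - 1)) v) n

variable {r p n} {v a b : V} {j : ℕ}

theorem entry_le_of_reflTransGen (h : ReflTransGen r v (p j)) : entry r p n v ≤ j :=
  Nat.find_min' _ (.inr h)

theorem reflTransGen_entry (h : entry r p n v < n) : ReflTransGen r v (p (entry r p n v)) :=
  (Nat.find_spec (⟨n, .inl le_rfl⟩ : ∃ j, n ≤ j ∨ ReflTransGen r v (p j))).resolve_left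
    h.not_ge

theorem entry_mono (h : ReflTransGen r a b) : entry r p n a ≤ entry r p n b :=
  Nat.find_mono fun _ => Or.imp_right h.trans

theorem lt_exit (hj : j < n) (h : ReflTransGen r (p j) v) : j < exit r p n v :=
  Nat.le_findGreatest hj ⟨j.succ_pos, h⟩

theorem exit_le (v : V) : exit r p n v ≤ n :=
  Nat.findGreatest_le n

theorem reflTransGen_exit (h : 0 < exit r p n v) : ReflTransGen r (p (exit r p n v - 1)) v :=
  (Nat.findGreatest_of_ne_zero rfl h.ne').2

theorem exit_mono (h : ReflTransGen r a b) : exit r p n a ≤ exit r p n b :=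
  Nat.findGreatest_mono_left (fun _ => And.imp_right fun hja => hja.trans h) n

end Path

section

variable (E : Finset (V × V)) (p : ℕ → V) (n : ℕ)

noncomputable def junctionTree (ℓ g : ℕ) : Finset (V × V) :=
  E.filter fun e => (entry (Adj E) p n e.2 ≤ g ∧ g < entry (Adj E) p n e.1 + 2 ^ ℓ) ∨
    (g < exit (Adj E) p n e.1 ∧ exit (Adj E) p n e.2 < g + 2 ^ (ℓ + 1))

noncomputable def gridPoint (x y : V) : ℕ × ℕ :=
  (dyadicLevel (entry (Adj E) p n x) (exit (Adj E) p n y),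
    dyadicCenter (entry (Adj E) p n x) (exit (Adj E) p n y))

variable {E p n} {x y : V} {ℓ g : ℕ}

theorem reflTransGen_junctionTree_to_root (hx : ReflTransGen (Adj E) x (p g))
    (hg : g < entry (Adj E) p n x + 2 ^ ℓ) :
    ReflTransGen (Adj (junctionTree E p n ℓ g)) x (p g) :=
  hx.mono_of_between fun _ _ hxa hab hbg => mem_filter.mpr ⟨hab, .inl
    ⟨(entry_mono hbg).trans (entry_le_of_reflTransGen .refl),
      hg.trans_le (Nat.add_le_add_right (entry_mono hxa) _)⟩⟩

theorem reflTransGen_junctionTree_from_root (hgn : g < n) (hy : ReflTransGen (Adj E) (p g) y)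
    (hg : exit (Adj E) p n y < g + 2 ^ (ℓ + 1)) :
    ReflTransGen (Adj (junctionTree E p n ℓ g)) (p g) y :=
  hy.mono_of_between fun _ _ hga hab hby => mem_filter.mpr ⟨hab, .inr
    ⟨(lt_exit hgn .refl).trans_le (exit_mono hga), (exit_mono hby).trans_lt hg⟩⟩

theorem isJunctionTree_junctionTree {ι : Type*} {s t : ι → V} {D : Finset ι} {q : ℕ × ℕ}
    (hp : ∀ i j, i ≤ j → j < n → ReflTransGen (Adj E) (p i) (p j))
    (hst : ∀ i, ∃ j < n, ReflTransGen (Adj E) (s i) (p j) ∧ ReflTransGen (Adj E) (p j) (t i))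
    (hD : ∀ i ∈ D, gridPoint E p n (s i) (t i) = q) :
    IsJunctionTree (junctionTree E p n q.1 q.2) (p q.2) D s t := by
  intro i hi
  obtain ⟨j, hj, hsj, hjt⟩ := hst i
  have ha : entry (Adj E) p n (s i) ≤ j := entry_le_of_reflTransGen hsj
  have hb : j < exit (Adj E) p n (t i) := lt_exit hj hjt
  have hbn : exit (Adj E) p n (t i) ≤ n := exit_le (t i)
  have hab := ha.trans_lt hb
  have hg := mem_Ico.mp (dyadicCenter_mem_Ico (entry (Adj E) p n (s i)) (exit (Adj E) p n (t i)))
  have hgb := dyadicCenter_lt_right hab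
  rw [← hD i hi]
  dsimp only [gridPoint]
  exact ⟨reflTransGen_junctionTree_to_root
      ((reflTransGen_entry (by omega)).trans (hp _ _ hg.1 (by omega))) hg.2,
    reflTransGen_junctionTree_from_root (by omega)
      ((hp _ _ (Nat.le_sub_one_of_lt hgb) (by omega)).trans (reflTransGen_exit (by omega)))
      (lt_dyadicCenter_add hab)⟩

theorem card_filter_mem_junctionTree_le [DecidableEq V] {e : V × V} (he : e ∈ E) (G : Finset ℕ)
    (hG : ∀ g ∈ G, 2 ^ ℓ ∣ g) : #{g ∈ G | e ∈ junctionTree E p n ℓ g} ≤ 3 := by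
  have hentry : entry (Adj E) p n e.1 ≤ entry (Adj E) p n e.2 := entry_mono (.single he)
  have hexit : exit (Adj E) p n e.1 ≤ exit (Adj E) p n e.2 := exit_mono (.single he)
  set a := entry (Adj E) p n e.2
  set b := exit (Adj E) p n e.2 + 1 - 2 * 2 ^ ℓ
  calc #{g ∈ G | e ∈ junctionTree E p n ℓ g}
      ≤ #({g ∈ Ico a (a + 1 * 2 ^ ℓ) | 2 ^ ℓ ∣ g} ∪
          {g ∈ Ico b (b + 2 * 2 ^ ℓ) | 2 ^ ℓ ∣ g}) := by
        refine card_le_card fun g hg => ?_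
        have hdvd := hG g (mem_filter.mp hg).1
        simp only [junctionTree, mem_filter, pow_succ] at hg
        simp only [mem_union, mem_filter, mem_Ico, hdvd, and_true]
        omega
    _ ≤ 1 + 2 := (card_union_le _ _).trans
        (add_le_add (Nat.card_filter_dvd_Ico_le _ _ _) (Nat.card_filter_dvd_Ico_le _ _ _))

theorem card_filter_mem_junctionTree_le_of_fst_le [DecidableEq V] {e : V × V} (he : e ∈ E)
    {T : Finset (ℕ × ℕ)} {L : ℕ} (hT : ∀ q ∈ T, q.1 ≤ L ∧ 2 ^ q.1 ∣ q.2) :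
    #{q ∈ T | e ∈ junctionTree E p n q.1 q.2} ≤ 3 * (L + 1) := by
  set F := {q ∈ T | e ∈ junctionTree E p n q.1 q.2}
  refine (card_le_mul_card_image (f := Prod.fst) F 3 fun ℓ _ => ?_).trans
    (Nat.mul_le_mul_left 3 ?_)
  · set G := {q ∈ T | q.1 = ℓ}.image Prod.snd
    have hG : ∀ g ∈ G, 2 ^ ℓ ∣ g := by
      simp only [G, mem_image, mem_filter]
      rintro _ ⟨q, ⟨hq, rfl⟩, rfl⟩
      exact (hT q hq).2
    refine (card_le_card_of_injOn Prod.snd (fun q hq => ?_) (fun q hq q' hq' h => ?_)).trans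
      (card_filter_mem_junctionTree_le (p := p) (n := n) he G hG)
    · simp only [F, coe_filter, Set.mem_ofPred_eq, mem_filter] at hq ⊢
      exact ⟨mem_image.mpr ⟨q, mem_filter.mpr ⟨hq.1.1, hq.2⟩, rfl⟩, hq.2 ▸ hq.1.2⟩
    · simp only [F, coe_filter, Set.mem_ofPred_eq, mem_filter] at hq hq'
      exact Prod.ext (hq.2.trans hq'.2.symm) h
  · refine (card_le_card fun ℓ hℓ => ?_).trans (card_range (L + 1)).le
    obtain ⟨q, hq, rfl⟩ := mem_image.mp hℓ
    exact mem_range.mpr (Nat.lt_succ_of_le (hT q (mem_filter.mp hq).1).1)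

theorem gridPoint_fst_le_log (x y : V) : (gridPoint E p n x y).1 ≤ Nat.log 2 n :=
  (dyadicLevel_le _ _).trans (Nat.log_mono_right (exit_le y))

theorem two_pow_gridPoint_fst_dvd (x y : V) :
    2 ^ (gridPoint E p n x y).1 ∣ (gridPoint E p n x y).2 :=
  dvd_dyadicCenter _ _

theorem exists_isJunctionTree_density_le {ι : Type*} [Fintype ι] [Nonempty ι]
    (E : Finset (V × V)) (c : V × V → ℝ) (hc : ∀ e, 0 ≤ c e) (s t : ι → V) (p : ℕ → V)
    (n : ℕ) (hp : ∀ i j, i ≤ j → j < n → ReflTransGen (Adj E) (p i) (p j))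
    (hst : ∀ i, ∃ j < n, ReflTransGen (Adj E) (s i) (p j) ∧ ReflTransGen (Adj E) (p j) (t i)) :
    ∃ (H : Finset (V × V)) (r : V) (D : Finset ι), H ⊆ E ∧ D.Nonempty ∧
      IsJunctionTree H r D s t ∧
      (∑ e ∈ H, c e) / #D ≤ 3 * (Nat.log 2 n + 1) * (∑ e ∈ E, c e) / Fintype.card ι := by
  classical
  set φ : ι → ℕ × ℕ := fun i => gridPoint E p n (s i) (t i)
  have hφ : ∀ q ∈ univ.image φ, q.1 ≤ Nat.log 2 n ∧ 2 ^ q.1 ∣ q.2 := by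
    simp only [mem_image, mem_univ, true_and, forall_exists_index, forall_apply_eq_imp_iff]
    exact fun i => ⟨gridPoint_fst_le_log _ _, two_pow_gridPoint_fst_dvd _ _⟩
  have hcost : ∑ q ∈ univ.image φ, ∑ e ∈ junctionTree E p n q.1 q.2, c e ≤
      ((3 * (Nat.log 2 n + 1) : ℕ) : ℝ) * ∑ e ∈ E, c e :=
    sum_sum_le_mul_sum (fun _ _ => filter_subset _ _) (fun e _ => hc e)
      fun _ he => card_filter_mem_junctionTree_le_of_fst_le he hφ
  obtain ⟨q, hq, hdens⟩ := exists_fiber_div_card_le φ _ hcost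
  obtain ⟨i₀, -, rfl⟩ := mem_image.mp hq
  refine ⟨junctionTree E p n (φ i₀).1 (φ i₀).2, p (φ i₀).2, ({i | φ i = φ i₀} : Finset ι),
    filter_subset _ _, ⟨i₀, by simp⟩,
    isJunctionTree_junctionTree hp hst fun i hi => (mem_filter.mp hi).2, ?_⟩
  exact_mod_cast hdens

end

end JunctionTree

theorem stmt_0_general {V : Type*}
    (Estar : Finset (V × V))
    (c : V × V → ℝ) (hc : ∀ e, 0 ≤ c e)
    (k : ℕ) (hk : 0 < k) (s t : Fin k → V)
    -- the directed path `P`, given as its list of vertices, contained in `E*`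
    (P : List V)
    (hPchain : P.Chain' (fun a b => (a, b) ∈ Estar))
    -- feasibility together with the "one path" property: each pair has an
    -- `sᵢ`–`tᵢ` dipath in `E*` intersecting `P` in at least one vertex
    (hfeas : ∀ i : Fin k, ∃ Pi : List V, Pi ≠ [] ∧
      Pi.Chain' (fun a b => (a, b) ∈ Estar) ∧
      Pi.head? = some (s i) ∧ Pi.getLast? = some (t i) ∧
      ∃ v, v ∈ P ∧ v ∈ Pi) :
    -- conclusion: a junction tree `H ⊆ E*` with root `r` covering a nonempty set
    -- `DH` of terminal pairs, of density at most `(10 log₂|P| + 12) c(E*) / k`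
    ∃ (H : Finset (V × V)) (r : V) (DH : Finset (Fin k)),
      H ⊆ Estar ∧ DH.Nonempty ∧
      (∀ i ∈ DH,
        Relation.ReflTransGen (fun a b => (a, b) ∈ H) (s i) r ∧
        Relation.ReflTransGen (fun a b => (a, b) ∈ H) r (t i)) ∧
      (∑ e ∈ H, c e) / (DH.card : ℝ) ≤
        (10 * Real.logb 2 ((P.length : ℝ) - 1) + 12) *
          (∑ e ∈ Estar, c e) / (k : ℝ) := by
  have : Nonempty (Fin k) := ⟨⟨0, hk⟩⟩
  let p : ℕ → V := fun j => P.getD j (s ⟨0, hk⟩)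
  have hp : ∀ i j, i ≤ j → j < P.length →
      ReflTransGen (fun a b => (a, b) ∈ Estar) (p i) (p j) := fun i j hij hj => by
    simp only [p, List.getD_eq_getElem _ _ hj, List.getD_eq_getElem _ _ (hij.trans_lt hj)]
    exact hPchain.reflTransGen_getElem hij hj
  have hst : ∀ i, ∃ j < P.length, ReflTransGen (fun a b => (a, b) ∈ Estar) (s i) (p j) ∧
      ReflTransGen (fun a b => (a, b) ∈ Estar) (p j) (t i) := by
    intro i
    obtain ⟨Pi, -, hPi, hs, ht, v, hvP, hvPi⟩ := hfeas i
    obtain ⟨j, hj, rfl⟩ := List.getElem_of_mem hvP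
    refine ⟨j, hj, ?_, ?_⟩ <;> simp only [p, List.getD_eq_getElem _ _ hj]
    exacts [hPi.reflTransGen_of_head?_eq hs hvPi, hPi.reflTransGen_of_getLast?_eq ht hvPi]
  obtain ⟨H, r, DH, hH, hDH, hJ, hdens⟩ :=
    JunctionTree.exists_isJunctionTree_density_le Estar c hc s t p P.length hp hst
  refine ⟨H, r, DH, hH, hDH, hJ, hdens.trans ?_⟩
  rw [Fintype.card_fin]
  gcongr
  · exact sum_nonneg fun e _ => hc e
  · exact Real.three_mul_natLog_add_one_le P.length

theorem stmt_0 {V : Type*} [Fintype V] [DecidableEq V]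
    (E Estar : Finset (V × V)) (hEsub : Estar ⊆ E)
    (c : V × V → ℝ) (hc : ∀ e, 0 ≤ c e)
    (k : ℕ) (hk : 0 < k) (s t : Fin k → V)
    -- the directed path `P`, given as its list of vertices, contained in `E*`
    (P : List V) (hPne : P ≠ [])
    (hPchain : P.Chain' (fun a b => (a, b) ∈ Estar))
    -- feasibility together with the "one path" property: each pair has an
    -- `sᵢ`–`tᵢ` dipath in `E*` intersecting `P` in at least one vertex
    (hfeas : ∀ i : Fin k, ∃ Pi : List V, Pi ≠ [] ∧
      Pi.Chain' (fun a b => (a, b) ∈ Estar) ∧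
      Pi.head? = some (s i) ∧ Pi.getLast? = some (t i) ∧
      ∃ v, v ∈ P ∧ v ∈ Pi) :
    -- conclusion: a junction tree `H ⊆ E*` with root `r` covering a nonempty set
    -- `DH` of terminal pairs, of density at most `(10 log₂|P| + 12) c(E*) / k`
    ∃ (H : Finset (V × V)) (r : V) (DH : Finset (Fin k)),
      H ⊆ Estar ∧ DH.Nonempty ∧
      (∀ i ∈ DH,
        Relation.ReflTransGen (fun a b => (a, b) ∈ H) (s i) r ∧
        Relation.ReflTransGen (fun a b => (a, b) ∈ H) r (t i)) ∧
      (∑ e ∈ H, c e) / (DH.card : ℝ) ≤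
        (10 * Real.logb 2 ((P.length : ℝ) - 1) + 12) *
          (∑ e ∈ Estar, c e) / (k : ℝ) :=
  stmt_0_general Estar c hc k hk s t P hPchain hfeas
end

section
/- In the reachability layering of a digraph, every edge joins vertices in the same layer or in consecutive layers: if (u, v) ∈ E* with u ∈ L_a and v ∈ L_b, then |a − b| ≤ 1. More precisely, if a ≠ b then {a, b} = {j, j+1} for some j, i.e., u and v lie in adjacent layers L_j and L_{j+1}. -/
/-!
A vertex lies in at most one layer, and it lies in `L_{j+1}` as soon as it meets that layer's
defining condition and lies in no earlier layer. So a vertex that reaches `L_{2k}` has index at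
most `2k+1`, and one reachable from `L_{2k+1}` has index at most `2k+2`. Since every vertex of
`L_{2k+1}` reaches `L_{2k}`, every vertex of `L_{2k+2}` is reached from `L_{2k+1}` and `L_0` is
closed under successors, a path from `x ∈ L_a` to `y ∈ L_b` forces `a ≤ b + 1` and `b ≤ a + 1`.
-/

/-- Reachability via directed paths using the edges of `E`. -/
def Reach {V : Type*} (E : Set (V × V)) (u w : V) : Prop :=
  Relation.ReflTransGen (fun a b => (a, b) ∈ E) u w

/-- The reachability layering of the digraph with edge set `E`, started at `v0`:
`L₀` is the set of vertices reachable from `v0`; for odd `j ≥ 1`, `L_j` is the set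
of yet-unlayered vertices that can reach `L_{j-1}`; for even `j ≥ 2`, `L_j` is the
set of yet-unlayered vertices reachable from `L_{j-1}`. -/
def layer {V : Type*} (E : Set (V × V)) (v0 : V) : ℕ → Set V
  | 0 => {v | Reach E v0 v}
  | (j + 1) =>
      {v | (∀ j' ≤ j, v ∉ layer E v0 j') ∧
        (if Odd (j + 1) then
          ∃ w ∈ layer E v0 j, Reach E v w
        else
          ∃ w ∈ layer E v0 j, Reach E w v)}

section Layer

variable {V : Type*} {E : Set (V × V)} {v0 x y : V}

theorem mem_layer_zero : x ∈ layer E v0 0 ↔ Reach E v0 x := by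
  simp only [layer, Set.mem_ofPred_eq]

theorem notMem_layer_of_mem_layer_add_one {i j : ℕ} (hx : x ∈ layer E v0 (j + 1)) (hij : i ≤ j) :
    x ∉ layer E v0 i := by
  simp only [layer, Set.mem_ofPred_eq] at hx
  exact hx.1 i hij

theorem mem_layer_two_mul_add_one {k : ℕ} :
    x ∈ layer E v0 (2 * k + 1) ↔
      (∀ i ≤ 2 * k, x ∉ layer E v0 i) ∧ ∃ w ∈ layer E v0 (2 * k), Reach E x w := by
  simp only [layer, Set.mem_ofPred_eq, if_pos (odd_two_mul_add_one k)]

theorem mem_layer_two_mul_add_two {k : ℕ} :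
    x ∈ layer E v0 (2 * k + 2) ↔
      (∀ i ≤ 2 * k + 1, x ∉ layer E v0 i) ∧ ∃ w ∈ layer E v0 (2 * k + 1), Reach E w x := by
  have hev : ¬Odd (2 * k + 1 + 1) := by
    rw [Nat.not_odd_iff_even, add_assoc]
    exact even_two_mul (k + 1)
  simp only [layer, Set.mem_ofPred_eq, if_neg hev]

theorem eq_of_mem_layer {i j : ℕ} (hi : x ∈ layer E v0 i) (hj : x ∈ layer E v0 j) : i = j := by
  wlog hij : i < j generalizing i j
  · rcases (not_lt.1 hij).lt_or_eq with hji | rfl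
    · exact (this hj hi hji).symm
    · rfl
  obtain ⟨j, rfl⟩ := Nat.exists_eq_add_of_lt hij
  exact absurd hi (notMem_layer_of_mem_layer_add_one hj (by omega))

theorem le_add_one_of_mem_layer {c j : ℕ} (hx : x ∈ layer E v0 c)
    (h : (∀ i ≤ j, x ∉ layer E v0 i) → x ∈ layer E v0 (j + 1)) : c ≤ j + 1 := by
  by_cases hearlier : ∃ i ≤ j, x ∈ layer E v0 i
  · obtain ⟨i, hij, hi⟩ := hearlier
    have := eq_of_mem_layer hx hi
    omega
  · push Not at hearlier
    exact (eq_of_mem_layer hx (h hearlier)).le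

theorem le_add_one_of_reach_mem_layer_two_mul {c k : ℕ} {w : V} (hx : x ∈ layer E v0 c)
    (hw : w ∈ layer E v0 (2 * k)) (hxw : Reach E x w) : c ≤ 2 * k + 1 :=
  le_add_one_of_mem_layer hx fun hnew => mem_layer_two_mul_add_one.2 ⟨hnew, w, hw, hxw⟩

theorem le_add_two_of_mem_layer_two_mul_add_one_reach {c k : ℕ} {w : V}
    (hx : x ∈ layer E v0 c) (hw : w ∈ layer E v0 (2 * k + 1)) (hwx : Reach E w x) :
    c ≤ 2 * k + 2 :=
  le_add_one_of_mem_layer hx fun hnew => mem_layer_two_mul_add_two.2 ⟨hnew, w, hw, hwx⟩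

theorem le_add_one_of_reach {a b : ℕ} (hx : x ∈ layer E v0 a) (hy : y ∈ layer E v0 b)
    (hxy : Reach E x y) : a ≤ b + 1 := by
  obtain ⟨k, rfl | rfl⟩ := Nat.even_or_odd' b
  · exact le_add_one_of_reach_mem_layer_two_mul hx hy hxy
  · obtain ⟨w, hw, hyw⟩ := (mem_layer_two_mul_add_one.1 hy).2
    have := le_add_one_of_reach_mem_layer_two_mul hx hw (hxy.trans hyw)
    omega

theorem le_add_one_of_reach_rev {a b : ℕ} (hx : x ∈ layer E v0 a) (hy : y ∈ layer E v0 b)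
    (hxy : Reach E x y) : b ≤ a + 1 := by
  obtain ⟨k, rfl | rfl⟩ := Nat.even_or_odd' a
  · rcases k with _ | k
    · have hy₀ : y ∈ layer E v0 0 := mem_layer_zero.2 ((mem_layer_zero.1 hx).trans hxy)
      have := eq_of_mem_layer hy hy₀
      omega
    · rw [show 2 * (k + 1) = 2 * k + 2 by ring] at hx ⊢
      obtain ⟨w, hw, hwx⟩ := (mem_layer_two_mul_add_two.1 hx).2
      have := le_add_two_of_mem_layer_two_mul_add_one_reach hy hw (hwx.trans hxy)
      omega
  · exact le_add_two_of_mem_layer_two_mul_add_one_reach hy hx hxy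

end Layer

theorem stmt_1 {V : Type*} (E : Set (V × V)) (v0 : V)
    (u v : V) (huv : (u, v) ∈ E)
    (a b : ℕ) (hu : u ∈ layer E v0 a) (hv : v ∈ layer E v0 b) :
    a = b ∨ b = a + 1 ∨ a = b + 1 := by
  have hreach : Reach E u v := Relation.ReflTransGen.single huv
  have hab := le_add_one_of_reach hu hv hreach
  have hba := le_add_one_of_reach_rev hu hv hreach
  omega
end

section
/- Consider the dyadic grouping of intervals I_i = [a_i, b_i] ⊆ {0,…,N} with N ≥ 1. For a nonempty group D_j^ℓ define its span S_j^ℓ = [min_{i∈D_j^ℓ} a_i, max_{i∈D_j^ℓ} b_i] (for level 0, S_0^v = {v}). Then every point u ∈ {0,…,N} lies in the spans of at most 5·log₂ N + 6 groups in total: it lies in at most one span S_0^v at level 0, and for each fixed j ∈ {1,…,⌊log₂ N⌋ + 1} it lies in S_j^ℓ for at most 5 multiples ℓ of 2^{j−1}. -/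
/-!
A level-`j` interval has length `< 2^j` and contains `ℓ`; so if one member of `D_j^ℓ` starts
at or before `u` and another ends at or after `u`, then `|ℓ - u| < 2^j = 2 · 2^{j-1}`. An open
window of length `4 · 2^{j-1}` contains at most four multiples of `2^{j-1}`, and summing over
the `⌊log₂ N⌋ + 1` levels gives the total bound.
-/

open Finset

theorem Nat.card_le_four_of_forall_dvd_of_near {m u : ℕ} (hm : 0 < m) {s : Finset ℕ}
    (hs : ∀ ℓ ∈ s, m ∣ ℓ ∧ ℓ < u + 2 * m ∧ u < ℓ + 2 * m) : #s ≤ 4 := by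
  have hmaps : ∀ ℓ ∈ s, ℓ / m ∈ Icc (u / m - 1) (u / m + 2) := by
    intro ℓ hℓ
    obtain ⟨⟨k, rfl⟩, hlt, hgt⟩ := hs ℓ hℓ
    have hu_lt := Nat.lt_mul_div_succ u hm
    have hu_ge := Nat.mul_div_le u m
    have hk_lt : k < u / m + 3 := Nat.lt_of_mul_lt_mul_left (a := m) (by linarith)
    have hk_gt : u / m < k + 2 := Nat.lt_of_mul_lt_mul_left (a := m) (by linarith)
    rw [Nat.mul_div_cancel_left k hm, mem_Icc]
    omega
  have hinj : Set.InjOn (· / m) s := fun x hx y hy hxy => by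
    rw [← Nat.div_mul_cancel (hs x hx).1, ← Nat.div_mul_cancel (hs y hy).1]
    exact congrArg (· * m) hxy
  calc #s ≤ #(Icc (u / m - 1) (u / m + 2)) := card_le_card_of_injOn _ hmaps hinj
    _ ≤ 4 := by rw [Nat.card_Icc]; omega

section DyadicGroup

variable {ι : Type*} (D : Finset ι) (a b : ι → ℕ)

def dyadicGroup (j ℓ : ℕ) : Finset ι :=
  D.filter (fun i => 2 ^ (j - 1) ≤ b i - a i ∧ b i - a i < 2 ^ j ∧ a i ≤ ℓ ∧ ℓ ≤ b i)

variable {D a b}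

theorem lt_add_two_pow_of_mem_dyadicGroup {j ℓ u : ℕ} {i : ι}
    (hi : i ∈ dyadicGroup D a b j ℓ) (hu : a i ≤ u) : ℓ < u + 2 ^ j := by
  simp only [dyadicGroup, mem_filter] at hi
  omega

theorem lt_add_two_pow_of_mem_dyadicGroup' {j ℓ u : ℕ} {i : ι}
    (hi : i ∈ dyadicGroup D a b j ℓ) (hu : u ≤ b i) : u < ℓ + 2 ^ j := by
  simp only [dyadicGroup, mem_filter] at hi
  omega

variable (D a b)

theorem card_dyadicGroup_spans_le_four (N u : ℕ) {j : ℕ} (hj : 1 ≤ j) :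
    #{ℓ ∈ range (N + 1) | 2 ^ (j - 1) ∣ ℓ ∧ (dyadicGroup D a b j ℓ).Nonempty ∧
      (∃ i ∈ dyadicGroup D a b j ℓ, a i ≤ u) ∧ (∃ i ∈ dyadicGroup D a b j ℓ, u ≤ b i)} ≤ 4 := by
  have hpow : 2 ^ j = 2 * 2 ^ (j - 1) := by rw [← pow_succ']; congr 1; omega
  refine Nat.card_le_four_of_forall_dvd_of_near (m := 2 ^ (j - 1)) (u := u) (by positivity)
    fun ℓ hℓ => ?_
  obtain ⟨-, hdvd, -, ⟨i, hi, hai⟩, ⟨i', hi', hbi'⟩⟩ := mem_filter.1 hℓ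
  rw [← hpow]
  exact ⟨hdvd, lt_add_two_pow_of_mem_dyadicGroup hi hai,
    lt_add_two_pow_of_mem_dyadicGroup' hi' hbi'⟩

end DyadicGroup

theorem stmt_6_general {ι : Type*} (D : Finset ι) (a b : ι → ℕ)
    (N : ℕ) (u : ℕ) :
    let grp : ℕ → ℕ → Finset ι := fun j ℓ =>
      D.filter (fun i => 2 ^ (j - 1) ≤ b i - a i ∧ b i - a i < 2 ^ j ∧
        a i ≤ ℓ ∧ ℓ ≤ b i)
    let grp0 : ℕ → Finset ι := fun v => D.filter (fun i => a i = b i ∧ a i = v)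
    -- number of level-0 groups whose span `{v}` contains `u`
    let cnt0 : ℕ :=
      ((Finset.range (N + 1)).filter (fun v => (grp0 v).Nonempty ∧ u = v)).card
    -- number of level-`j` groups (at multiples `ℓ` of `2^{j-1}`) whose span contains `u`
    let cnt : ℕ → ℕ := fun j =>
      ((Finset.range (N + 1)).filter (fun ℓ => 2 ^ (j - 1) ∣ ℓ ∧
        (grp j ℓ).Nonempty ∧ (∃ i ∈ grp j ℓ, a i ≤ u) ∧
        (∃ i ∈ grp j ℓ, u ≤ b i))).card
    cnt0 ≤ 1 ∧
    (∀ j ∈ Finset.Icc 1 (Nat.log 2 N + 1), cnt j ≤ 5) ∧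
    ((cnt0 : ℝ) + ∑ j ∈ Finset.Icc 1 (Nat.log 2 N + 1), (cnt j : ℝ)) ≤
      5 * Real.logb 2 (N : ℝ) + 6 := by
  intro grp grp0 cnt0 cnt
  have hcnt0 : cnt0 ≤ 1 := card_le_one.2 fun v hv w hw =>
    (mem_filter.1 hv).2.2.symm.trans (mem_filter.1 hw).2.2
  have hcnt : ∀ j ∈ Icc 1 (Nat.log 2 N + 1), cnt j ≤ 5 := fun j hj =>
    (card_dyadicGroup_spans_le_four D a b N u (mem_Icc.1 hj).1).trans (by norm_num)
  refine ⟨hcnt0, hcnt, ?_⟩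
  have hsum : ∑ j ∈ Icc 1 (Nat.log 2 N + 1), (cnt j : ℝ) ≤ (Nat.log 2 N + 1) * 5 := by
    calc ∑ j ∈ Icc 1 (Nat.log 2 N + 1), (cnt j : ℝ) ≤ #(Icc 1 (Nat.log 2 N + 1)) • (5 : ℝ) :=
          sum_le_card_nsmul _ _ _ fun j hj => by exact_mod_cast hcnt j hj
      _ = (Nat.log 2 N + 1) * 5 := by rw [Nat.card_Icc, nsmul_eq_mul]; push_cast; ring
  have hlog : (Nat.log 2 N : ℝ) ≤ Real.logb 2 N := Real.natLog_le_logb N 2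
  have hcnt0' : (cnt0 : ℝ) ≤ 1 := by exact_mod_cast hcnt0
  linarith

theorem stmt_6 {ι : Type*} [DecidableEq ι] (D : Finset ι) (a b : ι → ℕ)
    (N : ℕ) (hN : 1 ≤ N)
    (hab : ∀ i ∈ D, a i ≤ b i) (hbN : ∀ i ∈ D, b i ≤ N)
    (u : ℕ) (hu : u ≤ N) :
    let grp : ℕ → ℕ → Finset ι := fun j ℓ =>
      D.filter (fun i => 2 ^ (j - 1) ≤ b i - a i ∧ b i - a i < 2 ^ j ∧
        a i ≤ ℓ ∧ ℓ ≤ b i)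
    let grp0 : ℕ → Finset ι := fun v => D.filter (fun i => a i = b i ∧ a i = v)
    -- number of level-0 groups whose span `{v}` contains `u`
    let cnt0 : ℕ :=
      ((Finset.range (N + 1)).filter (fun v => (grp0 v).Nonempty ∧ u = v)).card
    -- number of level-`j` groups (at multiples `ℓ` of `2^{j-1}`) whose span contains `u`
    let cnt : ℕ → ℕ := fun j =>
      ((Finset.range (N + 1)).filter (fun ℓ => 2 ^ (j - 1) ∣ ℓ ∧
        (grp j ℓ).Nonempty ∧ (∃ i ∈ grp j ℓ, a i ≤ u) ∧
        (∃ i ∈ grp j ℓ, u ≤ b i))).card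
    cnt0 ≤ 1 ∧
    (∀ j ∈ Finset.Icc 1 (Nat.log 2 N + 1), cnt j ≤ 5) ∧
    ((cnt0 : ℝ) + ∑ j ∈ Finset.Icc 1 (Nat.log 2 N + 1), (cnt j : ℝ)) ≤
      5 * Real.logb 2 (N : ℝ) + 6 :=
  stmt_6_general D a b N u
end

section
/- Let G be a digraph containing a directed path P, and for a vertex s that can reach V(P), let a(s) denote the earliest vertex of P (with respect to the order ≤_P along P) reachable from s by a directed path in G. If P' is a directed path in G from s to a(s), P'' is a directed path in G from s' to a(s'), and V(P') ∩ V(P'') ≠ ∅, then a(s) = a(s'). Symmetrically, for a vertex t reachable from V(P), let b(t) denote the latest vertex of P that can reach t in G; if Q' is a directed path from b(t) to t, Q'' is a directed path from b(t') to t', and V(Q') ∩ V(Q'') ≠ ∅, then b(t) = b(t'). -/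
/-- `l` is (the vertex list of) a directed path from `u` to `w` using edges of `E`. -/
def IsDipath {V : Type*} (E : Set (V × V)) (l : List V) (u w : V) : Prop :=
  l ≠ [] ∧ l.Chain' (fun a b => (a, b) ∈ E) ∧
    l.head? = some u ∧ l.getLast? = some w

namespace IsDipath

variable {V : Type*} {E : Set (V × V)} {l : List V} {u w x : V}

theorem reach_mem (hl : IsDipath E l u w) (hx : x ∈ l) : Reach E u x := by
  obtain ⟨-, hchain, hhead, -⟩ := hl
  refine hchain.induction (Reach E u) l (fun _ _ hyz huy => huy.tail hyz) (fun hne => ?_) x hx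
  rw [List.head?_eq_some_head hne, Option.some_inj] at hhead
  exact hhead ▸ Relation.ReflTransGen.refl

theorem mem_reach (hl : IsDipath E l u w) (hx : x ∈ l) : Reach E x w := by
  obtain ⟨-, hchain, -, hlast⟩ := hl
  refine hchain.backwards_induction (Reach E · w) l (fun _ _ hyz hzw => hzw.head hyz)
    (fun hne => ?_) x hx
  rw [List.getLast?_eq_some_getLast hne, Option.some_inj] at hlast
  exact hlast ▸ Relation.ReflTransGen.refl

end IsDipath

section EarliestLatest

variable {V ι : Type*} [PartialOrder ι] {E : Set (V × V)} {S : Set ι} {p : ι → V}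

theorem earliest_index_eq_of_dipaths_meet {s s' : V} {i i' : ι} {P P' : List V}
    (hi : i ∈ S) (hi' : i' ∈ S)
    (hmin : ∀ l ∈ S, Reach E s (p l) → i ≤ l) (hmin' : ∀ l ∈ S, Reach E s' (p l) → i' ≤ l)
    (hP : IsDipath E P s (p i)) (hP' : IsDipath E P' s' (p i'))
    (hmeet : ∃ w, w ∈ P ∧ w ∈ P') : i = i' := by
  obtain ⟨w, hwP, hwP'⟩ := hmeet
  have hs_i' : Reach E s (p i') := (hP.reach_mem hwP).trans (hP'.mem_reach hwP')
  have hs'_i : Reach E s' (p i) := (hP'.reach_mem hwP').trans (hP.mem_reach hwP)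
  exact le_antisymm (hmin i' hi' hs_i') (hmin' i hi hs'_i)

theorem latest_index_eq_of_dipaths_meet {t t' : V} {i i' : ι} {Q Q' : List V}
    (hi : i ∈ S) (hi' : i' ∈ S)
    (hmax : ∀ l ∈ S, Reach E (p l) t → l ≤ i) (hmax' : ∀ l ∈ S, Reach E (p l) t' → l ≤ i')
    (hQ : IsDipath E Q (p i) t) (hQ' : IsDipath E Q' (p i') t')
    (hmeet : ∃ w, w ∈ Q ∧ w ∈ Q') : i = i' := by
  obtain ⟨w, hwQ, hwQ'⟩ := hmeet
  have hi_t' : Reach E (p i) t' := (hQ.reach_mem hwQ).trans (hQ'.mem_reach hwQ')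
  have hi'_t : Reach E (p i') t := (hQ'.reach_mem hwQ').trans (hQ.mem_reach hwQ)
  exact le_antisymm (hmax' i hi hi_t') (hmax i' hi' hi'_t)

end EarliestLatest

theorem stmt_7_general {V : Type*} (E : Set (V × V)) (n : ℕ) (p : ℕ → V) :
    -- first part: earliest reachable vertices coincide
    (∀ (s s' : V) (ia ia' : ℕ) (P' P'' : List V),
      ia ≤ n → ia' ≤ n →
      (∀ l ≤ n, Reach E s (p l) → ia ≤ l) →
      (∀ l ≤ n, Reach E s' (p l) → ia' ≤ l) →
      IsDipath E P' s (p ia) → IsDipath E P'' s' (p ia') →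
      (∃ w, w ∈ P' ∧ w ∈ P'') →
      p ia = p ia') ∧
    -- symmetric part: latest reaching vertices coincide
    (∀ (t t' : V) (ib ib' : ℕ) (Q' Q'' : List V),
      ib ≤ n → ib' ≤ n →
      (∀ l ≤ n, Reach E (p l) t → l ≤ ib) →
      (∀ l ≤ n, Reach E (p l) t' → l ≤ ib') →
      IsDipath E Q' (p ib) t → IsDipath E Q'' (p ib') t' →
      (∃ w, w ∈ Q' ∧ w ∈ Q'') →
      p ib = p ib') :=
  ⟨fun _ _ _ _ _ _ hia hia' hmin hmin' hP' hP'' hmeet =>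
    congrArg p <| earliest_index_eq_of_dipaths_meet (S := Set.Iic n)
      hia hia' hmin hmin' hP' hP'' hmeet,
   fun _ _ _ _ _ _ hib hib' hmax hmax' hQ' hQ'' hmeet =>
    congrArg p <| latest_index_eq_of_dipaths_meet (S := Set.Iic n)
      hib hib' hmax hmax' hQ' hQ'' hmeet⟩

theorem stmt_7 {V : Type*} (E : Set (V × V)) (n : ℕ) (p : ℕ → V)
    (hpath : ∀ l, l < n → (p l, p (l + 1)) ∈ E) :
    -- first part: earliest reachable vertices coincide
    (∀ (s s' : V) (ia ia' : ℕ) (P' P'' : List V),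
      ia ≤ n → ia' ≤ n →
      (∀ l ≤ n, Reach E s (p l) → ia ≤ l) →
      (∀ l ≤ n, Reach E s' (p l) → ia' ≤ l) →
      IsDipath E P' s (p ia) → IsDipath E P'' s' (p ia') →
      (∃ w, w ∈ P' ∧ w ∈ P'') →
      p ia = p ia') ∧
    -- symmetric part: latest reaching vertices coincide
    (∀ (t t' : V) (ib ib' : ℕ) (Q' Q'' : List V),
      ib ≤ n → ib' ≤ n →
      (∀ l ≤ n, Reach E (p l) t → l ≤ ib) →
      (∀ l ≤ n, Reach E (p l) t' → l ≤ ib') →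
      IsDipath E Q' (p ib) t → IsDipath E Q'' (p ib') t' →
      (∃ w, w ∈ Q' ∧ w ∈ Q'') →
      p ib = p ib') :=
  stmt_7_general E n p
end

section
/- Let G = (V, E) be a digraph with nonnegative edge costs c, let D = {(s_i, t_i)}_{i∈[k]} be terminal pairs, and let OPT denote the minimum cost of a feasible solution for (G, D). Suppose ρ ≥ 0 is such that for every nonempty subset D' ⊆ D there exists a junction tree H in G covering a nonempty subset D_H ⊆ D' with density c(H)/|D_H| ≤ ρ·OPT/|D'|. Then there exists a feasible solution for (G, D) of cost at most ρ·H_k·OPT, where H_k = Σ_{m=1}^k 1/m is the k-th harmonic number. -/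
/-!
Greedy covering: pick a junction tree of density at most `B / |D|` for the pairs `D` still
uncovered, discard the `d` pairs it serves and recurse. Its cost is at most `(d / n) B`, and
`d / n ≤ 1/(n-d+1) + ⋯ + 1/n`, so the costs telescope into `H_n B`; here `B = ρ·OPT`.
-/

open Finset

lemma Finset.sum_union_le_of_nonneg {α : Type*} [DecidableEq α] {f : α → ℝ} (hf : ∀ a, 0 ≤ f a)
    (s t : Finset α) : ∑ a ∈ s ∪ t, f a ≤ ∑ a ∈ s, f a + ∑ a ∈ t, f a := by
  rw [← sum_union_inter]
  exact le_add_of_nonneg_right (sum_nonneg fun a _ => hf a)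

lemma div_le_sum_Ioc_one_div {d n : ℕ} (hdn : d ≤ n) :
    (d : ℝ) / n ≤ ∑ m ∈ Ioc (n - d) n, (1 : ℝ) / m := by
  have hcard : #(Ioc (n - d) n) = d := by rw [Nat.card_Ioc]; omega
  have hterm : ∀ m ∈ Ioc (n - d) n, (1 : ℝ) / n ≤ 1 / m := fun m hm => by
    rw [mem_Ioc] at hm
    exact one_div_le_one_div_of_le (by exact_mod_cast (by omega : 0 < m)) (by exact_mod_cast hm.2)
  calc (d : ℝ) / n = #(Ioc (n - d) n) • ((1 : ℝ) / n) := by simp [hcard, div_eq_mul_inv]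
    _ ≤ _ := card_nsmul_le_sum _ _ _ hterm

lemma div_add_sum_Icc_sub_le_sum_Icc {d n : ℕ} (hdn : d ≤ n) :
    (d : ℝ) / n + ∑ m ∈ Icc 1 (n - d), (1 : ℝ) / m ≤ ∑ m ∈ Icc 1 n, (1 : ℝ) / m := by
  have hIcc (k : ℕ) : Icc 1 k = Ioc 0 k := Icc_add_one_left_eq_Ioc 0 k
  rw [hIcc, hIcc, ← sum_Ioc_consecutive _ (Nat.zero_le (n - d)) (Nat.sub_le n d), add_comm]
  exact add_le_add_right (div_le_sum_Ioc_one_div hdn) _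

section JunctionTrees

variable {V ι : Type*}

abbrev Reaches (F : Finset (V × V)) : V → V → Prop :=
  Relation.ReflTransGen fun a b => (a, b) ∈ F

lemma Reaches.mono {F F' : Finset (V × V)} (h : F ⊆ F') {a b : V} (hab : Reaches F a b) :
    Reaches F' a b :=
  Relation.ReflTransGen.mono (fun _ _ hxy => h hxy) _ _ hab

def HasDenseJunctionTrees (E : Finset (V × V)) (c : V × V → ℝ) (s t : ι → V) (B : ℝ) : Prop :=
  ∀ D : Finset ι, D.Nonempty →
    ∃ (H : Finset (V × V)) (r : V) (DH : Finset ι),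
      H ⊆ E ∧ DH ⊆ D ∧ DH.Nonempty ∧
      (∀ i ∈ DH, Reaches H (s i) r ∧ Reaches H r (t i)) ∧
      (∑ e ∈ H, c e) / #DH ≤ B / #D

variable [DecidableEq V] [DecidableEq ι] {E : Finset (V × V)} {c : V × V → ℝ} {s t : ι → V} {B : ℝ}

theorem HasDenseJunctionTrees.exists_cover (hc : ∀ e, 0 ≤ c e)
    (hB : HasDenseJunctionTrees E c s t B) (D : Finset ι) :
    ∃ F ⊆ E, (∀ i ∈ D, Reaches F (s i) (t i)) ∧
      ∑ e ∈ F, c e ≤ (∑ m ∈ Icc 1 #D, (1 : ℝ) / m) * B := by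
  induction D using Finset.strongInduction with
  | H D ih =>
  rcases D.eq_empty_or_nonempty with rfl | hD
  · exact ⟨∅, empty_subset _, by simp, by simp⟩
  obtain ⟨H, r, DH, hHE, hDH, hDHne, hpaths, hdens⟩ := hB D hD
  obtain ⟨F, hFE, hF, hFcost⟩ := ih (D \ DH) (sdiff_ssubset hDH hDHne)
  rw [card_sdiff_of_subset hDH] at hFcost
  have hd : (0 : ℝ) < #DH := by exact_mod_cast hDHne.card_pos
  have hn : (0 : ℝ) < #D := by exact_mod_cast hD.card_pos
  have hB0 : 0 ≤ B := by
    have h := (div_nonneg (sum_nonneg fun e _ => hc e) hd.le).trans hdens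
    rwa [le_div_iff₀ hn, zero_mul] at h
  have hHcost : ∑ e ∈ H, c e ≤ #DH / #D * B := by
    rw [div_le_div_iff₀ hd hn] at hdens
    rw [div_mul_eq_mul_div, le_div_iff₀ hn]
    linarith
  refine ⟨H ∪ F, union_subset hHE hFE, fun i hi => ?_, ?_⟩
  · by_cases hiDH : i ∈ DH
    · exact ((hpaths i hiDH).1.mono subset_union_left).trans
        ((hpaths i hiDH).2.mono subset_union_left)
    · exact (hF i (mem_sdiff.2 ⟨hi, hiDH⟩)).mono subset_union_right
  · calc ∑ e ∈ H ∪ F, c e ≤ ∑ e ∈ H, c e + ∑ e ∈ F, c e := sum_union_le_of_nonneg hc H F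
      _ ≤ #DH / #D * B + (∑ m ∈ Icc 1 (#D - #DH), (1 : ℝ) / m) * B := add_le_add hHcost hFcost
      _ = (#DH / #D + ∑ m ∈ Icc 1 (#D - #DH), (1 : ℝ) / m) * B := by ring
      _ ≤ (∑ m ∈ Icc 1 #D, (1 : ℝ) / m) * B :=
        mul_le_mul_of_nonneg_right (div_add_sum_Icc_sub_le_sum_Icc (card_le_card hDH)) hB0

end JunctionTrees

theorem stmt_14_general {V : Type*} [DecidableEq V]
    (E : Finset (V × V)) (c : V × V → ℝ) (hc : ∀ e, 0 ≤ c e)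
    (k : ℕ) (s t : Fin k → V) (OPT ρ : ℝ)
    -- every nonempty `D' ⊆ D` admits a junction tree of density `≤ ρ·OPT/|D'|`
    (hjunction : ∀ D' : Finset (Fin k), D'.Nonempty →
      ∃ (H : Finset (V × V)) (r : V) (DH : Finset (Fin k)),
        H ⊆ E ∧ DH ⊆ D' ∧ DH.Nonempty ∧
        (∀ i ∈ DH,
          Relation.ReflTransGen (fun a b => (a, b) ∈ H) (s i) r ∧
          Relation.ReflTransGen (fun a b => (a, b) ∈ H) r (t i)) ∧
        (∑ e ∈ H, c e) / (DH.card : ℝ) ≤ ρ * OPT / (D'.card : ℝ)) :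
    ∃ F ⊆ E,
      (∀ i : Fin k, Relation.ReflTransGen (fun a b => (a, b) ∈ F) (s i) (t i)) ∧
      ∑ e ∈ F, c e ≤ ρ * (∑ m ∈ Finset.Icc 1 k, (1 : ℝ) / (m : ℝ)) * OPT := by
  obtain ⟨F, hFE, hF, hcost⟩ :=
    HasDenseJunctionTrees.exists_cover (B := ρ * OPT) hc hjunction Finset.univ
  rw [card_univ, Fintype.card_fin] at hcost
  exact ⟨F, hFE, fun i => hF i (mem_univ i), by linarith⟩

theorem stmt_14 {V : Type*} [Fintype V] [DecidableEq V]
    (E : Finset (V × V)) (c : V × V → ℝ) (hc : ∀ e, 0 ≤ c e)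
    (k : ℕ) (s t : Fin k → V) (OPT ρ : ℝ) (hρ : 0 ≤ ρ)
    -- `OPT` is the minimum cost of a feasible solution
    (hOPT : IsLeast {x : ℝ | ∃ F ⊆ E,
      (∀ i : Fin k, Relation.ReflTransGen (fun a b => (a, b) ∈ F) (s i) (t i)) ∧
      x = ∑ e ∈ F, c e} OPT)
    -- every nonempty `D' ⊆ D` admits a junction tree of density `≤ ρ·OPT/|D'|`
    (hjunction : ∀ D' : Finset (Fin k), D'.Nonempty →
      ∃ (H : Finset (V × V)) (r : V) (DH : Finset (Fin k)),
        H ⊆ E ∧ DH ⊆ D' ∧ DH.Nonempty ∧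
        (∀ i ∈ DH,
          Relation.ReflTransGen (fun a b => (a, b) ∈ H) (s i) r ∧
          Relation.ReflTransGen (fun a b => (a, b) ∈ H) r (t i)) ∧
        (∑ e ∈ H, c e) / (DH.card : ℝ) ≤ ρ * OPT / (D'.card : ℝ)) :
    ∃ F ⊆ E,
      (∀ i : Fin k, Relation.ReflTransGen (fun a b => (a, b) ∈ F) (s i) (t i)) ∧
      ∑ e ∈ F, c e ≤ ρ * (∑ m ∈ Finset.Icc 1 k, (1 : ℝ) / (m : ℝ)) * OPT :=
  stmt_14_general E c hc k s t OPT ρ hjunction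
end
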